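/- arXiv:2211.11247 — 3 statements merged into one kernel-verified Lean document; each statement's English description precedes it below -/
import Mathlib

section
/- There exists ε > 0 such that whenever the initial matrices satisfy 0 < P_{i,0} ≤ ε·I for all i ∈ {1, …, N}, the iterates of the iterative law are monotonically nondecreasing in the Loewner order, i.e. P_{i,k+1} ≥ P_{i,k} for all i and all k ≥ 0, and for each i the sequence (P_{i,k})_{k≥0} converges entrywise to a positive definite matrix as k → ∞. -/
/-!
The iteration map is monotone in the Loewner order (inversion is antitone, congruence is
monotone), and from the first step on every iterate dominates `Q ≥ ε • 1 ≥ P₀`; so the iterates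
increase. For an upper bound, once `P ≥ Q` a step loses at most a fixed factor of information:
`P_{k+1,i}⁻¹ ≥ α A⁻ᵀ (∑ⱼ lᵢⱼ (P_{k,j}⁻¹ + Sⱼ)) A⁻¹`. Unrolling this, `P_{k,i}⁻¹` dominates
`∑ₛ αˢ (Lˢ)ᵢⱼ A⁻ˢᵀ Sⱼ A⁻ˢ`, which is positive definite as soon as `Lˢ > 0` for `n` consecutive
powers `s`, by observability. A monotone bounded sequence of symmetric matrices converges, and
its limit dominates `Q`.
-/

open Matrix Filter Topology
open scoped MatrixOrder ComplexOrder

namespace Matrix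

variable {n : Type*}

lemma PosDef.of_le {𝕜 : Type*} [RCLike 𝕜] {X Y : Matrix n n 𝕜} (hX : X.PosDef) (h : X ≤ Y) :
    Y.PosDef := by
  simpa using hX.add_posSemidef h

variable [Fintype n]

lemma inv_smul_of_ne_zero [DecidableEq n] {k : ℝ} (hk : k ≠ 0) {X : Matrix n n ℝ}
    (hX : IsUnit X.det) : (k • X)⁻¹ = k⁻¹ • X⁻¹ :=
  inv_eq_left_inv (by rw [smul_mul_smul, inv_mul_cancel₀ hk, nonsing_inv_mul _ hX, one_smul])

lemma mul_mul_transpose_le_mul_mul_transpose {X Y : Matrix n n ℝ} (h : X ≤ Y)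
    (M : Matrix n n ℝ) : M * X * Mᵀ ≤ M * Y * Mᵀ := by
  simpa [star_eq_conjTranspose] using star_right_conjugate_le_conjugate h M

lemma transpose_mul_mul_le_transpose_mul_mul {X Y : Matrix n n ℝ} (h : X ≤ Y)
    (M : Matrix n n ℝ) : Mᵀ * X * M ≤ Mᵀ * Y * M := by
  simpa using mul_mul_transpose_le_mul_mul_transpose h Mᵀ

lemma mul_mul_transpose_nonneg {m : Type*} [Fintype m] {X : Matrix m m ℝ} (h : 0 ≤ X)
    (M : Matrix n m ℝ) : 0 ≤ M * X * Mᵀ := by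
  simpa using (h.posSemidef.mul_mul_conjTranspose_same M).nonneg

lemma transpose_mul_mul_nonneg {m : Type*} [Fintype m] {X : Matrix m m ℝ} (h : 0 ≤ X)
    (M : Matrix m n ℝ) : 0 ≤ Mᵀ * X * M := by
  simpa using (h.posSemidef.conjTranspose_mul_mul_same M).nonneg

lemma dotProduct_transpose_mul_mul_mulVec {m : Type*} [Fintype m] (S : Matrix m m ℝ)
    (M : Matrix m n ℝ) (x : n → ℝ) :
    x ⬝ᵥ (Mᵀ * S * M) *ᵥ x = (M *ᵥ x) ⬝ᵥ S *ᵥ (M *ᵥ x) := by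
  rw [← mulVec_mulVec, ← mulVec_mulVec, dotProduct_mulVec, vecMul_transpose]

lemma dotProduct_mulVec_mono {X Y : Matrix n n ℝ} (h : X ≤ Y) (x : n → ℝ) :
    x ⬝ᵥ X *ᵥ x ≤ x ⬝ᵥ Y *ᵥ x := by
  simpa [sub_mulVec] using (le_iff.mp h).dotProduct_mulVec_nonneg x

lemma PosDef.of_tendsto {f : ℕ → Matrix n n ℝ} {Q L : Matrix n n ℝ} (hQ : Q.PosDef)
    (hherm : ∀ k, (f k).IsHermitian) (hle : ∀ᶠ k in atTop, Q ≤ f k)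
    (hf : Tendsto f atTop (𝓝 L)) : L.PosDef := by
  have hL : L.IsHermitian := by
    refine tendsto_nhds_unique ?_ hf
    simpa only [Function.comp_def, id, (hherm _).eq] using
      ((continuous_id.matrix_conjTranspose.tendsto L).comp hf)
  refine .of_dotProduct_mulVec_pos hL fun x hx ↦ ?_
  have hqf : Tendsto (fun k ↦ x ⬝ᵥ f k *ᵥ x) atTop (𝓝 (x ⬝ᵥ L *ᵥ x)) :=
    ((continuous_const.dotProduct (continuous_id.matrix_mulVec continuous_const)).tendsto L).comp hf
  simpa using (hQ.dotProduct_mulVec_pos hx).trans_le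
    (ge_of_tendsto hqf (hle.mono fun k hk ↦ dotProduct_mulVec_mono hk x))

variable [DecidableEq n]

lemma PosDef.inv_inv {A : Matrix n n ℝ} (hA : A.PosDef) : A⁻¹⁻¹ = A :=
  nonsing_inv_nonsing_inv _ ((isUnit_iff_isUnit_det _).mp hA.isUnit)

/-- `X ≤ Y` and `Y⁻¹ ≤ X⁻¹` both say that the block matrix `[Y 1; 1 X⁻¹]` is positive
semidefinite, read off through its two Schur complements. -/
lemma PosDef.inv_anti {𝕜 : Type*} [RCLike 𝕜] {X Y : Matrix n n 𝕜} (hX : X.PosDef)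
    (h : X ≤ Y) : Y⁻¹ ≤ X⁻¹ := by
  have hY := hX.of_le h
  have := hX.isUnit.invertible
  have := hY.isUnit.invertible
  have := hX.inv.isUnit.invertible
  have hblock : (fromBlocks Y 1 1ᴴ X⁻¹).PosSemidef :=
    (PosDef.fromBlocks₂₂ Y 1 hX.inv).mpr (by simpa [le_iff, inv_inv_of_invertible] using h)
  simpa [le_iff] using (PosDef.fromBlocks₁₁ 1 X⁻¹ hY).mp hblock

lemma PosDef.mul_mul_transpose {X : Matrix n n ℝ} (hX : X.PosDef) {M : Matrix n n ℝ}
    (hM : IsUnit M.det) : (M * X * Mᵀ).PosDef := by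
  simpa [star_eq_conjTranspose] using
    ((isUnit_iff_isUnit_det M).mpr hM).posDef_star_right_conjugate_iff.mpr hX

lemma IsHermitian.exists_pos_le_smul_one {A : Matrix n n ℝ} (hA : A.IsHermitian) :
    ∃ r : ℝ, 0 < r ∧ A ≤ r • 1 := by
  obtain ⟨r, hr⟩ := Finite.exists_le hA.eigenvalues
  refine ⟨max r 1, by positivity, ?_⟩
  rw [← Algebra.algebraMap_eq_smul_one]
  refine le_algebraMap_of_spectrum_le ?_ hA.isSelfAdjoint
  rw [hA.spectrum_real_eq_range_eigenvalues]
  rintro _ ⟨i, rfl⟩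
  exact (hr i).trans (le_max_left r 1)

lemma PosDef.exists_pos_smul_one_le {A : Matrix n n ℝ} (hA : A.PosDef) :
    ∃ r : ℝ, 0 < r ∧ r • 1 ≤ A := by
  obtain ⟨r, hr, hle⟩ := hA.inv.isHermitian.exists_pos_le_smul_one
  refine ⟨r⁻¹, inv_pos.mpr hr, ?_⟩
  simpa [inv_smul_of_ne_zero hr.ne', hA.inv_inv] using hA.inv.inv_anti hle

lemma PosDef.exists_le_smul {Q V : Matrix n n ℝ} (hQ : Q.IsHermitian) (hV : V.PosDef) :
    ∃ c : ℝ, 0 < c ∧ Q ≤ c • V := by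
  obtain ⟨M, hM, hQM⟩ := hQ.exists_pos_le_smul_one
  obtain ⟨r, hr, hrV⟩ := hV.exists_pos_smul_one_le
  refine ⟨M / r, by positivity, hQM.trans ?_⟩
  calc M • (1 : Matrix n n ℝ) = (M / r) • r • 1 := by rw [smul_smul, div_mul_cancel₀ _ hr.ne']
    _ ≤ (M / r) • V := smul_le_smul_of_nonneg_left hrV (by positivity)

lemma IsHermitian.apply_eq_polarization {M : Matrix n n ℝ} (hM : M.IsHermitian) (a b : n) :
    M a b = ((Pi.single a 1 + Pi.single b 1) ⬝ᵥ M *ᵥ (Pi.single a 1 + Pi.single b 1)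
      - Pi.single a 1 ⬝ᵥ M *ᵥ Pi.single a 1 - Pi.single b 1 ⬝ᵥ M *ᵥ Pi.single b 1) / 2 := by
  have hba : M b a = M a b := by simpa using hM.apply a b
  simp only [mulVec_add, dotProduct_add, add_dotProduct, mulVec_single, single_dotProduct]
  simp [hba]
  ring

/-- The quadratic forms converge monotonically, and polarization recovers the entries. -/
lemma tendsto_of_monotone_of_le {f : ℕ → Matrix n n ℝ} (hf : Monotone f)
    (hherm : ∀ k, (f k).IsHermitian) {B : Matrix n n ℝ} (hB : ∀ᶠ k in atTop, f k ≤ B) :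
    ∃ L, Tendsto f atTop (𝓝 L) := by
  obtain ⟨K, hK⟩ := eventually_atTop.mp hB
  have hq : ∀ x : n → ℝ, ∃ l, Tendsto (fun k ↦ x ⬝ᵥ f k *ᵥ x) atTop (𝓝 l) := fun x ↦
    ⟨_, tendsto_atTop_ciSup (fun j k hjk ↦ dotProduct_mulVec_mono (hf hjk) x)
      ⟨x ⬝ᵥ B *ᵥ x, by
        rintro _ ⟨k, rfl⟩
        exact dotProduct_mulVec_mono ((hf (k.le_add_right K)).trans (hK _ (K.le_add_left k))) x⟩⟩
  choose l hl using hq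
  refine ⟨of fun a b ↦ (l (Pi.single a 1 + Pi.single b 1) - l (Pi.single a 1)
    - l (Pi.single b 1)) / 2, tendsto_pi_nhds.mpr fun a ↦ tendsto_pi_nhds.mpr fun b ↦ ?_⟩
  simp_rw [(hherm _).apply_eq_polarization a b]
  exact (((hl _).sub (hl _)).sub (hl _)).div_const 2

lemma exists_pos_of_mem_rowStochastic {L : Matrix n n ℝ} (hL : L ∈ rowStochastic ℝ n) (i : n) :
    ∃ j, 0 < L i j := by
  obtain ⟨j, -, hj⟩ := Finset.exists_lt_of_sum_lt (f := 0) (g := L i) (s := Finset.univ)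
    (by simp [sum_row_of_mem_rowStochastic hL i])
  exact ⟨j, hj⟩

lemma pow_apply_pos_of_le {L : Matrix n n ℝ} (hL : L ∈ rowStochastic ℝ n) {k s : ℕ}
    (hk : ∀ i j, 0 < (L ^ k) i j) (hks : k ≤ s) (i j : n) : 0 < (L ^ s) i j := by
  obtain ⟨l, hl⟩ := exists_pos_of_mem_rowStochastic (pow_mem hL (s - k)) i
  rw [← Nat.sub_add_cancel hks, pow_add, mul_apply]
  exact Finset.sum_pos' (fun l _ ↦ mul_nonneg (nonneg_of_mem_rowStochastic (pow_mem hL _))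
    (hk l j).le) ⟨l, Finset.mem_univ l, mul_pos hl (hk l j)⟩

end Matrix

namespace HCRE

variable {n ι : Type*} [Fintype n] [DecidableEq n] [Fintype ι]

section Observability

variable {m : ι → Type*} [∀ i, Fintype (m i)] {A : Matrix n n ℝ} {C : ∀ i, Matrix (m i) n ℝ}
  {d : ℕ}

lemma exists_mulVec_pow_ne_zero_of_posDef
    (hObs : (∑ k ∈ Finset.range d, (A ^ k)ᵀ * (∑ i, (C i)ᵀ * C i) * A ^ k).PosDef)
    {x : n → ℝ} (hx : x ≠ 0) : ∃ p < d, ∃ i, C i *ᵥ (A ^ p *ᵥ x) ≠ 0 := by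
  by_contra! h
  have hzero : (∑ k ∈ Finset.range d, (A ^ k)ᵀ * (∑ i, (C i)ᵀ * C i) * A ^ k) *ᵥ x = 0 := by
    rw [sum_mulVec]
    exact Finset.sum_eq_zero fun p hp ↦ by
      simp [sum_mulVec, ← mulVec_mulVec, h p (Finset.mem_range.mp hp)]
  have := hObs.dotProduct_mulVec_pos hx
  rw [hzero, dotProduct_zero] at this
  exact lt_irrefl _ this

lemma exists_mulVec_inv_pow_ne_zero_of_posDef (hA : IsUnit A.det)
    (hObs : (∑ k ∈ Finset.range d, (A ^ k)ᵀ * (∑ i, (C i)ᵀ * C i) * A ^ k).PosDef)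
    (k : ℕ) {x : n → ℝ} (hx : x ≠ 0) :
    ∃ s, k < s ∧ s ≤ k + d ∧ ∃ i, C i *ᵥ (A⁻¹ ^ s *ᵥ x) ≠ 0 := by
  have hAp : ∀ p, A ^ p * A⁻¹ ^ p = 1 := fun p ↦ by
    rw [inv_pow', mul_nonsing_inv _ (by rw [det_pow]; exact hA.pow p)]
  have hz : A⁻¹ ^ (k + d) *ᵥ x ≠ 0 := fun h0 ↦ hx <| by
    simpa only [mulVec_mulVec, hAp, one_mulVec, mulVec_zero] using congrArg (A ^ (k + d) *ᵥ ·) h0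
  obtain ⟨p, hp, i, hi⟩ := exists_mulVec_pow_ne_zero_of_posDef hObs hz
  obtain ⟨s, hs⟩ := Nat.exists_eq_add_of_le (show p ≤ k + d by omega)
  refine ⟨s, by omega, by omega, i, ?_⟩
  rwa [hs, pow_add, ← mulVec_mulVec, mulVec_mulVec (A⁻¹ ^ s *ᵥ x), hAp, one_mulVec] at hi

end Observability

variable [DecidableEq ι]

/-- `Sⱼ` stands for the measurement information `Cⱼᵀ Rⱼ⁻¹ Cⱼ`. -/
noncomputable def fusedInfo (L : Matrix ι ι ℝ) (S P : ι → Matrix n n ℝ) (i : ι) : Matrix n n ℝ :=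
  ∑ j, (L i j • (P j)⁻¹ + L i j • S j)

noncomputable def riccatiStep (A Q : Matrix n n ℝ) (L : Matrix ι ι ℝ) (S P : ι → Matrix n n ℝ)
    (i : ι) : Matrix n n ℝ :=
  A * (fusedInfo L S P i)⁻¹ * Aᵀ + Q

section Step

variable {A Q : Matrix n n ℝ} {L : Matrix ι ι ℝ} {S P P' : ι → Matrix n n ℝ}

lemma fusedInfo_posDef (hL : L ∈ rowStochastic ℝ ι) (hS : ∀ j, 0 ≤ S j)
    (hP : ∀ j, (P j).PosDef) (i : ι) : (fusedInfo L S P i).PosDef := by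
  have hterm : ∀ j, 0 ≤ L i j • (P j)⁻¹ + L i j • S j := fun j ↦
    add_nonneg (smul_nonneg (nonneg_of_mem_rowStochastic hL) (hP j).inv.posSemidef.nonneg)
      (smul_nonneg (nonneg_of_mem_rowStochastic hL) (hS j))
  obtain ⟨j, hj⟩ := exists_pos_of_mem_rowStochastic hL i
  refine ((hP j).inv.smul hj).of_le ?_
  calc L i j • (P j)⁻¹ ≤ L i j • (P j)⁻¹ + L i j • S j :=
        le_add_of_nonneg_right (smul_nonneg hj.le (hS j))
    _ ≤ fusedInfo L S P i := Finset.single_le_sum (fun j _ ↦ hterm j) (Finset.mem_univ j)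

lemma le_riccatiStep (hL : L ∈ rowStochastic ℝ ι) (hS : ∀ j, 0 ≤ S j)
    (hP : ∀ j, (P j).PosDef) (i : ι) : Q ≤ riccatiStep A Q L S P i :=
  le_add_of_nonneg_left <|
    mul_mul_transpose_nonneg (fusedInfo_posDef hL hS hP i).inv.posSemidef.nonneg A

lemma riccatiStep_posDef (hL : L ∈ rowStochastic ℝ ι) (hS : ∀ j, 0 ≤ S j) (hQ : Q.PosDef)
    (hP : ∀ j, (P j).PosDef) (i : ι) : (riccatiStep A Q L S P i).PosDef :=
  hQ.of_le (le_riccatiStep hL hS hP i)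

lemma fusedInfo_anti (hL : L ∈ rowStochastic ℝ ι) (hP : ∀ j, (P j).PosDef)
    (h : ∀ j, P j ≤ P' j) (i : ι) : fusedInfo L S P' i ≤ fusedInfo L S P i :=
  Finset.sum_le_sum fun j _ ↦ add_le_add_left
    (smul_le_smul_of_nonneg_left ((hP j).inv_anti (h j)) (nonneg_of_mem_rowStochastic hL)) _

lemma riccatiStep_mono (hL : L ∈ rowStochastic ℝ ι) (hS : ∀ j, 0 ≤ S j)
    (hP : ∀ j, (P j).PosDef) (h : ∀ j, P j ≤ P' j) (i : ι) :
    riccatiStep A Q L S P i ≤ riccatiStep A Q L S P' i := by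
  have hZ' := fusedInfo_posDef hL hS (fun j ↦ (hP j).of_le (h j)) i
  exact add_le_add_left (mul_mul_transpose_le_mul_mul_transpose
    (hZ'.inv_anti (fusedInfo_anti hL hP h i)) A) Q

lemma fusedInfo_le (hL : L ∈ rowStochastic ℝ ι) (hS : ∀ j, 0 ≤ S j) (hQ : Q.PosDef)
    (hQP : ∀ j, Q ≤ P j) (i : ι) : fusedInfo L S P i ≤ Q⁻¹ + ∑ j, S j := by
  calc fusedInfo L S P i ≤ ∑ j, (L i j • Q⁻¹ + S j) :=
        Finset.sum_le_sum fun j _ ↦ add_le_add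
          (smul_le_smul_of_nonneg_left (hQ.inv_anti (hQP j)) (nonneg_of_mem_rowStochastic hL))
          (smul_le_of_le_one_left (hS j) (le_one_of_mem_rowStochastic hL))
    _ = Q⁻¹ + ∑ j, S j := by
        rw [Finset.sum_add_distrib, ← Finset.sum_smul, sum_row_of_mem_rowStochastic hL, one_smul]

lemma smul_conj_fusedInfo_le_inv_riccatiStep (hA : IsUnit A.det) (hL : L ∈ rowStochastic ℝ ι)
    (hS : ∀ j, 0 ≤ S j) (hQ : Q.PosDef) (hQP : ∀ j, Q ≤ P j) {c : ℝ} (hc : 0 ≤ c)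
    (hQc : Q ≤ c • (A * (Q⁻¹ + ∑ j, S j)⁻¹ * Aᵀ)) (i : ι) :
    (1 + c)⁻¹ • ((A⁻¹)ᵀ * fusedInfo L S P i * A⁻¹) ≤ (riccatiStep A Q L S P i)⁻¹ := by
  have hP : ∀ j, (P j).PosDef := fun j ↦ hQ.of_le (hQP j)
  have hZ := fusedInfo_posDef hL hS hP i
  set X := A * (fusedInfo L S P i)⁻¹ * Aᵀ
  have hX : X.PosDef := hZ.inv.mul_mul_transpose hA
  have hQX : Q ≤ c • X := hQc.trans <| smul_le_smul_of_nonneg_left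
    (mul_mul_transpose_le_mul_mul_transpose (hZ.inv_anti (fusedInfo_le hL hS hQ hQP i)) A) hc
  have hstep : riccatiStep A Q L S P i ≤ (1 + c) • X :=
    calc riccatiStep A Q L S P i = X + Q := rfl
      _ ≤ X + c • X := add_le_add_right hQX X
      _ = (1 + c) • X := by rw [add_smul, one_smul]
  have hXinv : X⁻¹ = (A⁻¹)ᵀ * fusedInfo L S P i * A⁻¹ := by
    rw [Matrix.mul_inv_rev, Matrix.mul_inv_rev, hZ.inv_inv, transpose_nonsing_inv, mul_assoc]
  have := (riccatiStep_posDef hL hS hQ hP i).inv_anti hstep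
  rwa [inv_smul_of_ne_zero (by positivity) ((isUnit_iff_isUnit_det X).mp hX.isUnit), hXinv] at this

/-- With `G = A⁻¹` this is the information recursion of the iteration with the loss of each step
capped at the factor `α`, so it bounds the information matrices `P_k⁻¹` from below. -/
noncomputable def infoBound (α : ℝ) (G : Matrix n n ℝ) (L : Matrix ι ι ℝ) (S : ι → Matrix n n ℝ) :
    ℕ → ι → Matrix n n ℝ
  | 0, _ => 0
  | t + 1, i => α • (Gᵀ * (∑ j, L i j • (infoBound α G L S t j + S j)) * G)

variable {α : ℝ} {G : Matrix n n ℝ}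

lemma infoBound_nonneg (hα : 0 ≤ α) (hL : L ∈ rowStochastic ℝ ι) (hS : ∀ j, 0 ≤ S j) :
    ∀ t i, 0 ≤ infoBound α G L S t i
  | 0, _ => le_rfl
  | t + 1, _ => smul_nonneg hα <| transpose_mul_mul_nonneg (Finset.sum_nonneg fun j _ ↦
      smul_nonneg (nonneg_of_mem_rowStochastic hL)
        (add_nonneg (infoBound_nonneg hα hL hS t j) (hS j))) G

lemma infoBound_succ_le (hα : 0 ≤ α) (hL : L ∈ rowStochastic ℝ ι) {t : ℕ}
    (h : ∀ j, infoBound α G L S t j ≤ (P j)⁻¹) (i : ι) :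
    infoBound α G L S (t + 1) i ≤ α • (Gᵀ * fusedInfo L S P i * G) := by
  refine smul_le_smul_of_nonneg_left (transpose_mul_mul_le_transpose_mul_mul
    (Finset.sum_le_sum fun j _ ↦ ?_) G) hα
  rw [smul_add]
  exact add_le_add_left (smul_le_smul_of_nonneg_left (h j) (nonneg_of_mem_rowStochastic hL)) _

lemma smul_pow_le_infoBound (hα : 0 ≤ α) (hL : L ∈ rowStochastic ℝ ι) (hS : ∀ j, 0 ≤ S j)
    {s t : ℕ} (hs : 1 ≤ s) (hst : s ≤ t) (i j : ι) :
    (α ^ s * (L ^ s) i j) • ((G ^ s)ᵀ * S j * G ^ s) ≤ infoBound α G L S t i := by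
  induction t generalizing s i with
  | zero => omega
  | succ t ih =>
    obtain rfl | ⟨s, rfl, hs'⟩ : s = 1 ∨ ∃ s', s = s' + 1 ∧ 1 ≤ s' := by
      rcases s with _ | _ | s <;> simp_all
    · calc (α ^ 1 * (L ^ 1) i j) • ((G ^ 1)ᵀ * S j * G ^ 1) = α • (Gᵀ * (L i j • S j) * G) := by
            simp only [pow_one, Matrix.smul_mul, Matrix.mul_smul, smul_smul]
        _ ≤ infoBound α G L S (t + 1) i := by
          have hterm : ∀ l, 0 ≤ L i l • (infoBound α G L S t l + S l) := fun l ↦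
            smul_nonneg (nonneg_of_mem_rowStochastic hL)
              (add_nonneg (infoBound_nonneg hα hL hS t l) (hS l))
          refine smul_le_smul_of_nonneg_left (transpose_mul_mul_le_transpose_mul_mul
            (le_trans ?_ (Finset.single_le_sum (fun l _ ↦ hterm l) (Finset.mem_univ j))) G) hα
          exact smul_le_smul_of_nonneg_left (le_add_of_nonneg_left (infoBound_nonneg hα hL hS t j))
            (nonneg_of_mem_rowStochastic hL)
    · calc (α ^ (s + 1) * (L ^ (s + 1)) i j) • ((G ^ (s + 1))ᵀ * S j * G ^ (s + 1))
            = α • (Gᵀ * (∑ l, L i l • ((α ^ s * (L ^ s) l j) • ((G ^ s)ᵀ * S j * G ^ s))) * G) := by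
            simp_rw [smul_smul, ← Finset.sum_smul, Matrix.mul_smul, Matrix.smul_mul, smul_smul]
            congr 1
            · rw [pow_succ' L s, mul_apply, Finset.mul_sum, Finset.mul_sum]
              exact Finset.sum_congr rfl fun l _ ↦ by ring
            · simp only [pow_succ, transpose_mul, Matrix.mul_assoc]
        _ ≤ infoBound α G L S (t + 1) i :=
          smul_le_smul_of_nonneg_left (transpose_mul_mul_le_transpose_mul_mul
            (Finset.sum_le_sum fun l _ ↦ smul_le_smul_of_nonneg_left
              ((ih hs' (by omega) l).trans (le_add_of_nonneg_right (hS l)))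
              (nonneg_of_mem_rowStochastic hL)) G) hα

lemma infoBound_posDef (hα : 0 < α) (hL : L ∈ rowStochastic ℝ ι) (hS : ∀ j, 0 ≤ S j) {t : ℕ}
    {i : ι} (h : ∀ x : n → ℝ, x ≠ 0 → ∃ s j, 1 ≤ s ∧ s ≤ t ∧ 0 < (L ^ s) i j ∧
      0 < (G ^ s *ᵥ x) ⬝ᵥ S j *ᵥ (G ^ s *ᵥ x)) :
    (infoBound α G L S t i).PosDef := by
  refine .of_dotProduct_mulVec_pos (infoBound_nonneg hα.le hL hS t i).posSemidef.isHermitian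
    fun x hx ↦ ?_
  obtain ⟨s, j, hs, hst, hLs, hSx⟩ := h x hx
  have := dotProduct_mulVec_mono (smul_pow_le_infoBound (G := G) hα.le hL hS hs hst i j) x
  rw [smul_mulVec, dotProduct_smul, smul_eq_mul, dotProduct_transpose_mul_mul_mulVec] at this
  simpa using (mul_pos (mul_pos (pow_pos hα s) hLs) hSx).trans_le this

lemma infoBound_posDef_of_observable {m : ι → Type*} [∀ i, Fintype (m i)]
    [∀ i, DecidableEq (m i)] {C : ∀ i, Matrix (m i) n ℝ} {R : ∀ i, Matrix (m i) (m i) ℝ} {d : ℕ}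
    {α : ℝ} (hα : 0 < α) (hL : L ∈ rowStochastic ℝ ι) (hA : IsUnit A.det)
    (hR : ∀ i, (R i).PosDef)
    (hObs : (∑ k ∈ Finset.range d, (A ^ k)ᵀ * (∑ i, (C i)ᵀ * C i) * A ^ k).PosDef)
    {k : ℕ} (hk : ∀ i j, 0 < (L ^ k) i j) (i : ι) :
    (infoBound α A⁻¹ L (fun j ↦ (C j)ᵀ * (R j)⁻¹ * C j) (k + d) i).PosDef := by
  refine infoBound_posDef hα hL (fun j ↦ transpose_mul_mul_nonneg (hR j).inv.posSemidef.nonneg _)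
    fun x hx ↦ ?_
  obtain ⟨s, hks, hsd, j, hj⟩ := exists_mulVec_inv_pow_ne_zero_of_posDef hA hObs k hx
  refine ⟨s, j, by omega, hsd, pow_apply_pos_of_le hL hk hks.le i j, ?_⟩
  rw [dotProduct_transpose_mul_mul_mulVec]
  simpa using (hR j).inv.dotProduct_mulVec_pos hj

end Step

section Iterates

variable {A Q : Matrix n n ℝ} {L : Matrix ι ι ℝ} {S : ι → Matrix n n ℝ}
  {P : ℕ → ι → Matrix n n ℝ}

lemma iterate_posDef (hL : L ∈ rowStochastic ℝ ι) (hS : ∀ j, 0 ≤ S j) (hQ : Q.PosDef)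
    (hP0 : ∀ i, (P 0 i).PosDef) (hrec : ∀ k, P (k + 1) = riccatiStep A Q L S (P k)) :
    ∀ k i, (P k i).PosDef
  | 0 => hP0
  | k + 1 => by
    rw [hrec]
    exact riccatiStep_posDef hL hS hQ (iterate_posDef hL hS hQ hP0 hrec k)

lemma le_iterate (hL : L ∈ rowStochastic ℝ ι) (hS : ∀ j, 0 ≤ S j)
    (hPD : ∀ k i, (P k i).PosDef) (hrec : ∀ k, P (k + 1) = riccatiStep A Q L S (P k))
    {k : ℕ} (hk : 1 ≤ k) (i : ι) : Q ≤ P k i := by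
  obtain ⟨k, rfl⟩ := Nat.exists_eq_add_of_le' hk
  rw [hrec]
  exact le_riccatiStep hL hS (hPD k) i

lemma iterate_monotone (hL : L ∈ rowStochastic ℝ ι) (hS : ∀ j, 0 ≤ S j)
    (hPD : ∀ k i, (P k i).PosDef) (hrec : ∀ k, P (k + 1) = riccatiStep A Q L S (P k))
    (h01 : ∀ i, P 0 i ≤ P 1 i) (i : ι) : Monotone (P · i) := by
  have hsucc : ∀ k i, P k i ≤ P (k + 1) i := by
    intro k
    induction k with
    | zero => exact h01
    | succ k ih =>
      simpa only [← hrec] using riccatiStep_mono (A := A) (Q := Q) hL hS (hPD k) ih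
  exact monotone_nat_of_le_succ fun k ↦ hsucc k i

lemma infoBound_le_inv_iterate (hA : IsUnit A.det) (hL : L ∈ rowStochastic ℝ ι)
    (hS : ∀ j, 0 ≤ S j) (hQ : Q.PosDef) (hPD : ∀ k i, (P k i).PosDef)
    (hrec : ∀ k, P (k + 1) = riccatiStep A Q L S (P k)) {c : ℝ} (hc : 0 ≤ c)
    (hQc : Q ≤ c • (A * (Q⁻¹ + ∑ j, S j)⁻¹ * Aᵀ)) :
    ∀ t k i, infoBound (1 + c)⁻¹ A⁻¹ L S t i ≤ (P (k + 1 + t) i)⁻¹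
  | 0, k, i => (hPD _ i).inv.posSemidef.nonneg
  | t + 1, k, i => by
    rw [← add_assoc, hrec]
    exact (infoBound_succ_le (by positivity) hL
      (fun j ↦ infoBound_le_inv_iterate hA hL hS hQ hPD hrec hc hQc t k j) i).trans
      (smul_conj_fusedInfo_le_inv_riccatiStep hA hL hS hQ
        (fun j ↦ le_iterate hL hS hPD hrec (by omega) j) hc hQc i)

lemma eventually_iterate_le_of_observable {m : ι → Type*} [∀ i, Fintype (m i)]
    [∀ i, DecidableEq (m i)] {C : ∀ i, Matrix (m i) n ℝ} {R : ∀ i, Matrix (m i) (m i) ℝ} {d : ℕ}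
    (hA : IsUnit A.det) (hL : L ∈ rowStochastic ℝ ι) (hQ : Q.PosDef) (hR : ∀ i, (R i).PosDef)
    (hObs : (∑ k ∈ Finset.range d, (A ^ k)ᵀ * (∑ i, (C i)ᵀ * C i) * A ^ k).PosDef)
    {k : ℕ} (hk : ∀ i j, 0 < (L ^ k) i j) (hPD : ∀ k i, (P k i).PosDef)
    (hrec : ∀ k, P (k + 1) = riccatiStep A Q L (fun j ↦ (C j)ᵀ * (R j)⁻¹ * C j) (P k)) (i : ι) :
    ∃ B, ∀ᶠ k' in atTop, P k' i ≤ B := by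
  set S := fun j ↦ (C j)ᵀ * (R j)⁻¹ * C j
  have hS : ∀ j, 0 ≤ S j := fun j ↦ transpose_mul_mul_nonneg (hR j).inv.posSemidef.nonneg _
  have hW : (Q⁻¹ + ∑ j, S j).PosDef :=
    hQ.inv.add_posSemidef (Finset.sum_nonneg fun j _ ↦ hS j).posSemidef
  obtain ⟨c, hc, hQc⟩ := PosDef.exists_le_smul hQ.isHermitian (hW.inv.mul_mul_transpose hA)
  have hH := infoBound_posDef_of_observable (by positivity : 0 < (1 + c)⁻¹) hL hA hR hObs hk i
  refine ⟨(infoBound (1 + c)⁻¹ A⁻¹ L S (k + d) i)⁻¹,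
    eventually_atTop.mpr ⟨k + d + 1, fun k' hk' ↦ ?_⟩⟩
  obtain ⟨k'', rfl⟩ := Nat.exists_eq_add_of_le' hk'
  have := hH.inv_anti (infoBound_le_inv_iterate hA hL hS hQ hPD hrec hc.le hQc (k + d) k'' i)
  rwa [(hPD _ i).inv_inv, show k'' + 1 + (k + d) = k'' + (k + d + 1) by omega] at this

end Iterates

end HCRE

open HCRE

theorem hcre_iterates_monotone_of_small_init_general
    (n N : ℕ)
    (m : Fin N → ℕ)
    (A : Matrix (Fin n) (Fin n) ℝ) (hA : IsUnit A.det)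
    (C : ∀ i : Fin N, Matrix (Fin (m i)) (Fin n) ℝ)
    (hObs : (∑ k ∈ Finset.range n, (A ^ k)ᵀ * (∑ i, (C i)ᵀ * C i) * A ^ k).PosDef)
    (Q : Matrix (Fin n) (Fin n) ℝ) (hQ : Q.PosDef)
    (R : ∀ i : Fin N, Matrix (Fin (m i)) (Fin (m i)) ℝ) (hR : ∀ i, (R i).PosDef)
    (L : Matrix (Fin N) (Fin N) ℝ)
    (hLnonneg : ∀ i j, 0 ≤ L i j) (hLrow : ∀ i, ∑ j, L i j = 1)
    (hLprim : ∃ k : ℕ, 0 < k ∧ ∀ i j, 0 < (L ^ k) i j) :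
    ∃ ε : ℝ, 0 < ε ∧
      ∀ (P0 : Fin N → Matrix (Fin n) (Fin n) ℝ),
        (∀ i, (P0 i).PosDef) →
        (∀ i, (ε • (1 : Matrix (Fin n) (Fin n) ℝ) - P0 i).PosSemidef) →
        ∀ (Pseq : ℕ → Fin N → Matrix (Fin n) (Fin n) ℝ),
          Pseq 0 = P0 →
          (∀ k i, Pseq (k + 1) i =
            A * (∑ j, (L i j • (Pseq k j)⁻¹ + L i j • ((C j)ᵀ * (R j)⁻¹ * C j)))⁻¹ * Aᵀ + Q) →
          (∀ i : Fin N, ∀ k : ℕ, (Pseq (k + 1) i - Pseq k i).PosSemidef) ∧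
          (∀ i : Fin N, ∃ Plim : Matrix (Fin n) (Fin n) ℝ, Plim.PosDef ∧
            Tendsto (fun k => Pseq k i) atTop (nhds Plim)) := by
  obtain ⟨k, -, hk⟩ := hLprim
  have hL : L ∈ rowStochastic ℝ (Fin N) := mem_rowStochastic_iff_sum.mpr ⟨hLnonneg, hLrow⟩
  have hS : ∀ j, 0 ≤ (C j)ᵀ * (R j)⁻¹ * C j := fun j ↦
    transpose_mul_mul_nonneg (hR j).inv.posSemidef.nonneg _
  obtain ⟨ε, hε, hεQ⟩ := hQ.exists_pos_smul_one_le
  refine ⟨ε, hε, fun P0 hP0 hP0ε P hP0eq hPrec ↦ ?_⟩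
  subst hP0eq
  have hrec : ∀ k, P (k + 1) = riccatiStep A Q L _ (P k) := fun k ↦ funext (hPrec k)
  have hPD := iterate_posDef hL hS hQ hP0 hrec
  have hmono := iterate_monotone hL hS hPD hrec fun i ↦
    (le_iff.mpr (hP0ε i)).trans (hεQ.trans (le_iterate hL hS hPD hrec le_rfl i))
  refine ⟨fun i k ↦ le_iff.mp (hmono i k.le_succ), fun i ↦ ?_⟩
  obtain ⟨B, hB⟩ := eventually_iterate_le_of_observable hA hL hQ hR hObs hk hPD hrec i
  obtain ⟨Plim, hlim⟩ := tendsto_of_monotone_of_le (hmono i) (fun k ↦ (hPD k i).isHermitian) hB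
  exact ⟨Plim, hQ.of_tendsto (fun k ↦ (hPD k i).isHermitian)
    (eventually_atTop.mpr ⟨1, fun k hk ↦ le_iterate hL hS hPD hrec hk i⟩) hlim, hlim⟩

/-- For sufficiently small positive definite initial matrices
(below ε·I), the HCRE iterates are monotone nondecreasing in the Loewner order
and converge entrywise to a positive definite matrix. -/
theorem hcre_iterates_monotone_of_small_init
    (n N : ℕ) (hn : 0 < n) (hN : 0 < N)
    (m : Fin N → ℕ) (hm : ∀ i, 0 < m i)
    (A : Matrix (Fin n) (Fin n) ℝ) (hA : IsUnit A.det)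
    (C : ∀ i : Fin N, Matrix (Fin (m i)) (Fin n) ℝ)
    (hObs : (∑ k ∈ Finset.range n, (A ^ k)ᵀ * (∑ i, (C i)ᵀ * C i) * A ^ k).PosDef)
    (Q : Matrix (Fin n) (Fin n) ℝ) (hQ : Q.PosDef)
    (R : ∀ i : Fin N, Matrix (Fin (m i)) (Fin (m i)) ℝ) (hR : ∀ i, (R i).PosDef)
    (L : Matrix (Fin N) (Fin N) ℝ)
    (hLnonneg : ∀ i j, 0 ≤ L i j) (hLrow : ∀ i, ∑ j, L i j = 1)
    (hLprim : ∃ k : ℕ, 0 < k ∧ ∀ i j, 0 < (L ^ k) i j) :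
    ∃ ε : ℝ, 0 < ε ∧
      ∀ (P0 : Fin N → Matrix (Fin n) (Fin n) ℝ),
        (∀ i, (P0 i).PosDef) →
        (∀ i, (ε • (1 : Matrix (Fin n) (Fin n) ℝ) - P0 i).PosSemidef) →
        ∀ (Pseq : ℕ → Fin N → Matrix (Fin n) (Fin n) ℝ),
          Pseq 0 = P0 →
          (∀ k i, Pseq (k + 1) i =
            A * (∑ j, (L i j • (Pseq k j)⁻¹ + L i j • ((C j)ᵀ * (R j)⁻¹ * C j)))⁻¹ * Aᵀ + Q) →
          (∀ i : Fin N, ∀ k : ℕ, (Pseq (k + 1) i - Pseq k i).PosSemidef) ∧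
          (∀ i : Fin N, ∃ Plim : Matrix (Fin n) (Fin n) ℝ, Plim.PosDef ∧
            Tendsto (fun k => Pseq k i) atTop (nhds Plim)) :=
  hcre_iterates_monotone_of_small_init_general n N m A hA C hObs Q hQ R hR L hLnonneg hLrow hLprim
end

section
/- Let {P_i^{(1)}}_{i=1}^N and {P_i^{(2)}}_{i=1}^N be two groups of positive definite solutions of the HCREs, and for τ = 1, 2 define P̃_i^{(τ)} = (∑_{j=1}^N l_{ij} (P_j^{(τ)})^{-1})^{-1}, A_j^{(τ)} = A ((P̃_j^{(τ)})^{-1} + S_j)^{-1} (P̃_j^{(τ)})^{-1}, and Ã_{ij}^{(τ)} = √(l_{ij}) · P̃_i^{(τ)} (P_j^{(τ)})^{-1} A_j^{(τ)}. Then for every i ∈ {1, …, N}, P̃_i^{(1)} − P̃_i^{(2)} = ∑_{j=1}^N Ã_{ij}^{(1)} (P̃_j^{(1)} − P̃_j^{(2)}) (Ã_{ij}^{(2)})ᵀ. -/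
open Matrix

/-!
Both solutions satisfy `P_j = A (P̃_j⁻¹ + S_j)⁻¹ Aᵀ + Q`, so the resolvent identity
`X⁻¹ - Y⁻¹ = X⁻¹ (Y - X) Y⁻¹`, used twice, gives
`P_j⁽¹⁾ - P_j⁽²⁾ = A_j⁽¹⁾ (P̃_j⁽¹⁾ - P̃_j⁽²⁾) (A_j⁽²⁾)ᵀ`. The same identity applied to the
harmonic means `P̃_i = (∑_j l_ij P_j⁻¹)⁻¹` writes `P̃_i⁽¹⁾ - P̃_i⁽²⁾` as
`∑_j l_ij P̃_i⁽¹⁾ (P_j⁽¹⁾)⁻¹ (P_j⁽¹⁾ - P_j⁽²⁾) (P_j⁽²⁾)⁻¹ P̃_i⁽²⁾`; substituting the first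
identity and splitting `l_ij = √l_ij √l_ij` gives the claim.
-/

namespace Matrix

variable {d ι : Type*}

theorem inv_sub_inv_rev [Fintype d] [DecidableEq d] {K : Type*} [CommRing K] {X Y : Matrix d d K}
    (h : IsUnit X ↔ IsUnit Y) : X⁻¹ - Y⁻¹ = Y⁻¹ * (Y - X) * X⁻¹ := by
  rw [← neg_sub, Matrix.inv_sub_inv h.symm, ← neg_sub X Y, Matrix.mul_neg, Matrix.neg_mul]

theorem PosDef.transpose_eq {M : Matrix d d ℝ} (hM : M.PosDef) : Mᵀ = M :=
  (isHermitian_iff_isSymm.mp hM.isHermitian).eq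

theorem posDef_sum_smul [Fintype ι] {w : ι → ℝ} (hw : ∀ j, 0 ≤ w j) (hw₀ : 0 < ∑ j, w j)
    {P : ι → Matrix d d ℝ} (hP : ∀ j, (P j).PosDef) : (∑ j, w j • P j).PosDef := by
  classical
  obtain ⟨j₀, -, hj₀⟩ := Finset.exists_lt_of_sum_lt (s := .univ) (f := 0) (g := w)
    (by simpa using hw₀)
  rw [← Finset.add_sum_erase _ _ (Finset.mem_univ j₀)]
  exact ((hP j₀).smul hj₀).add_posSemidef
    (posSemidef_sum _ fun j _ => (hP j).posSemidef.smul (hw j))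

theorem PosDef.posSemidef_transpose_mul_inv_mul [Fintype d] {e : Type*} [Fintype e] [DecidableEq e]
    {R : Matrix e e ℝ} (hR : R.PosDef) (C : Matrix e d ℝ) : (Cᵀ * R⁻¹ * C).PosSemidef :=
  conjTranspose_eq_transpose_of_trivial C ▸ hR.inv.posSemidef.conjTranspose_mul_mul_same C

theorem mul_inv_add_mul_transpose_sub [Fintype d] [DecidableEq d] {e : Type*} [Fintype e]
    {X₁ X₂ S : Matrix d d ℝ} (A : Matrix e d ℝ) (hX₁ : X₁.PosDef) (hX₂ : X₂.PosDef)
    (hS : S.PosSemidef) :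
    A * (X₁⁻¹ + S)⁻¹ * Aᵀ - A * (X₂⁻¹ + S)⁻¹ * Aᵀ =
      A * (X₁⁻¹ + S)⁻¹ * X₁⁻¹ * (X₁ - X₂) * (A * (X₂⁻¹ + S)⁻¹ * X₂⁻¹)ᵀ := by
  have hM₁ := hX₁.inv.add_posSemidef hS
  have hM₂ := hX₂.inv.add_posSemidef hS
  have hdiff : (X₁⁻¹ + S)⁻¹ - (X₂⁻¹ + S)⁻¹ =
      (X₁⁻¹ + S)⁻¹ * X₁⁻¹ * (X₁ - X₂) * X₂⁻¹ * (X₂⁻¹ + S)⁻¹ := by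
    rw [Matrix.inv_sub_inv (iff_of_true hM₁.isUnit hM₂.isUnit), add_sub_add_right_eq_sub,
      inv_sub_inv_rev (iff_of_true hX₂.isUnit hX₁.isUnit)]
    simp only [Matrix.mul_assoc]
  rw [← Matrix.sub_mul, ← Matrix.mul_sub, hdiff, transpose_mul, transpose_mul,
    transpose_nonsing_inv, transpose_nonsing_inv, hX₂.transpose_eq, hM₂.transpose_eq]
  simp only [Matrix.mul_assoc]

end Matrix

section HarmonicMean

variable {d ι : Type*} [Fintype d] [DecidableEq d] [Fintype ι]
  {w : ι → ℝ} {P P₁ P₂ : ι → Matrix d d ℝ}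

/-- The paper's `P̃_i` is `harmonicMean (L i) P`. -/
noncomputable def harmonicMean (w : ι → ℝ) (P : ι → Matrix d d ℝ) : Matrix d d ℝ :=
  (∑ j, w j • (P j)⁻¹)⁻¹

variable (hw : ∀ j, 0 ≤ w j) (hw₀ : 0 < ∑ j, w j)
include hw hw₀

theorem inv_harmonicMean (hP : ∀ j, (P j).PosDef) :
    (harmonicMean w P)⁻¹ = ∑ j, w j • (P j)⁻¹ :=
  nonsing_inv_nonsing_inv _ (posDef_sum_smul hw hw₀ fun j => (hP j).inv).det_pos.ne'.isUnit

theorem posDef_harmonicMean (hP : ∀ j, (P j).PosDef) : (harmonicMean w P).PosDef :=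
  (posDef_sum_smul hw hw₀ fun j => (hP j).inv).inv

theorem harmonicMean_sub_harmonicMean (hP₁ : ∀ j, (P₁ j).PosDef) (hP₂ : ∀ j, (P₂ j).PosDef) :
    harmonicMean w P₁ - harmonicMean w P₂ = ∑ j, w j •
      (harmonicMean w P₁ * (P₁ j)⁻¹ * (P₁ j - P₂ j) * (P₂ j)⁻¹ * harmonicMean w P₂) := by
  have h₁ := posDef_harmonicMean hw hw₀ hP₁
  have h₂ := posDef_harmonicMean hw hw₀ hP₂
  calc harmonicMean w P₁ - harmonicMean w P₂
      = harmonicMean w P₁ * ((harmonicMean w P₂)⁻¹ - (harmonicMean w P₁)⁻¹)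
          * harmonicMean w P₂ := by
        simpa only [nonsing_inv_nonsing_inv _ h₁.det_pos.ne'.isUnit,
          nonsing_inv_nonsing_inv _ h₂.det_pos.ne'.isUnit] using
          Matrix.inv_sub_inv (iff_of_true h₁.inv.isUnit h₂.inv.isUnit)
    _ = _ := by
        simp only [inv_harmonicMean hw hw₀ hP₁, inv_harmonicMean hw hw₀ hP₂,
          ← Finset.sum_sub_distrib, ← smul_sub, Finset.mul_sum, Finset.sum_mul,
          mul_smul_comm, smul_mul_assoc,
          inv_sub_inv_rev (iff_of_true (hP₂ _).isUnit (hP₁ _).isUnit), Matrix.mul_assoc]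

end HarmonicMean

theorem hcre_two_solutions_difference_identity_general
    (n N : ℕ)
    (m : Fin N → ℕ)
    (A : Matrix (Fin n) (Fin n) ℝ)
    (C : ∀ i : Fin N, Matrix (Fin (m i)) (Fin n) ℝ)
    (Q : Matrix (Fin n) (Fin n) ℝ)
    (R : ∀ i : Fin N, Matrix (Fin (m i)) (Fin (m i)) ℝ) (hR : ∀ i, (R i).PosDef)
    (L : Matrix (Fin N) (Fin N) ℝ)
    (hLnonneg : ∀ i j, 0 ≤ L i j) (hLrow : ∀ i, ∑ j, L i j = 1)
    (S : Fin N → Matrix (Fin n) (Fin n) ℝ)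
    (hS : ∀ j, S j = ∑ h, L j h • ((C h)ᵀ * (R h)⁻¹ * C h))
    (P1 P2 : Fin N → Matrix (Fin n) (Fin n) ℝ)
    (hP1pos : ∀ i, (P1 i).PosDef) (hP2pos : ∀ i, (P2 i).PosDef)
    (hsol1 : ∀ i, P1 i =
      A * (∑ j, (L i j • (P1 j)⁻¹ + L i j • ((C j)ᵀ * (R j)⁻¹ * C j)))⁻¹ * Aᵀ + Q)
    (hsol2 : ∀ i, P2 i =
      A * (∑ j, (L i j • (P2 j)⁻¹ + L i j • ((C j)ᵀ * (R j)⁻¹ * C j)))⁻¹ * Aᵀ + Q)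
    (Ptil1 Ptil2 : Fin N → Matrix (Fin n) (Fin n) ℝ)
    (hPtil1 : ∀ i, Ptil1 i = (∑ j, L i j • (P1 j)⁻¹)⁻¹)
    (hPtil2 : ∀ i, Ptil2 i = (∑ j, L i j • (P2 j)⁻¹)⁻¹)
    (Asol1 Asol2 : Fin N → Matrix (Fin n) (Fin n) ℝ)
    (hAsol1 : ∀ j, Asol1 j = A * ((Ptil1 j)⁻¹ + S j)⁻¹ * (Ptil1 j)⁻¹)
    (hAsol2 : ∀ j, Asol2 j = A * ((Ptil2 j)⁻¹ + S j)⁻¹ * (Ptil2 j)⁻¹)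
    (Atil1 Atil2 : Fin N → Fin N → Matrix (Fin n) (Fin n) ℝ)
    (hAtil1 : ∀ i j, Atil1 i j = Real.sqrt (L i j) • (Ptil1 i * (P1 j)⁻¹ * Asol1 j))
    (hAtil2 : ∀ i j, Atil2 i j = Real.sqrt (L i j) • (Ptil2 i * (P2 j)⁻¹ * Asol2 j)) :
    ∀ i : Fin N,
      Ptil1 i - Ptil2 i = ∑ j, Atil1 i j * (Ptil1 j - Ptil2 j) * (Atil2 i j)ᵀ := by
  have hLpos : ∀ a, 0 < ∑ j, L a j := fun a => (hLrow a).symm ▸ one_pos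
  have hSpsd : ∀ j, (S j).PosSemidef := fun j => hS j ▸ posSemidef_sum _ fun h _ =>
    ((hR h).posSemidef_transpose_mul_inv_mul (C h)).smul (hLnonneg j h)
  have hriccati : ∀ P : Fin N → Matrix (Fin n) (Fin n) ℝ, (∀ j, (P j).PosDef) →
      (∀ i, P i = A * (∑ j, (L i j • (P j)⁻¹ + L i j • ((C j)ᵀ * (R j)⁻¹ * C j)))⁻¹ * Aᵀ + Q) →
      ∀ i, P i = A * ((harmonicMean (L i) P)⁻¹ + S i)⁻¹ * Aᵀ + Q := fun P hP hsol i => by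
    rw [hsol i, Finset.sum_add_distrib, inv_harmonicMean (hLnonneg i) (hLpos i) hP, hS i]
  have hPt1 : ∀ a, Ptil1 a = harmonicMean (L a) P1 := hPtil1
  have hPt2 : ∀ a, Ptil2 a = harmonicMean (L a) P2 := hPtil2
  have hPt1pos : ∀ a, (Ptil1 a).PosDef := fun a =>
    hPt1 a ▸ posDef_harmonicMean (hLnonneg a) (hLpos a) hP1pos
  have hPt2pos : ∀ a, (Ptil2 a).PosDef := fun a =>
    hPt2 a ▸ posDef_harmonicMean (hLnonneg a) (hLpos a) hP2pos
  have hdiff : ∀ j, P1 j - P2 j = Asol1 j * (Ptil1 j - Ptil2 j) * (Asol2 j)ᵀ := fun j => by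
    rw [hriccati P1 hP1pos hsol1 j, hriccati P2 hP2pos hsol2 j, add_sub_add_right_eq_sub,
      hAsol1, hAsol2, ← hPt1, ← hPt2]
    exact mul_inv_add_mul_transpose_sub A (hPt1pos j) (hPt2pos j) (hSpsd j)
  intro i
  rw [hPt1 i, hPt2 i, harmonicMean_sub_harmonicMean (hLnonneg i) (hLpos i) hP1pos hP2pos,
    ← hPt1 i, ← hPt2 i]
  refine Finset.sum_congr rfl fun j _ => ?_
  rw [hAtil1, hAtil2, hdiff j, transpose_smul, transpose_mul, transpose_mul,
    transpose_nonsing_inv, (hP2pos j).transpose_eq, (hPt2pos i).transpose_eq]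
  simp only [smul_mul_assoc, mul_smul_comm, smul_smul, Matrix.mul_assoc,
    Real.mul_self_sqrt (hLnonneg i j)]

/-- For two groups of positive definite solutions of the HCREs, the
difference of the harmonic means satisfies
`P̃_i⁽¹⁾ − P̃_i⁽²⁾ = ∑_j Ã_{ij}⁽¹⁾ (P̃_j⁽¹⁾ − P̃_j⁽²⁾) (Ã_{ij}⁽²⁾)ᵀ`. -/
theorem hcre_two_solutions_difference_identity
    (n N : ℕ) (hn : 0 < n) (hN : 0 < N)
    (m : Fin N → ℕ) (hm : ∀ i, 0 < m i)
    (A : Matrix (Fin n) (Fin n) ℝ) (hA : IsUnit A.det)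
    (C : ∀ i : Fin N, Matrix (Fin (m i)) (Fin n) ℝ)
    (hObs : (∑ k ∈ Finset.range n, (A ^ k)ᵀ * (∑ i, (C i)ᵀ * C i) * A ^ k).PosDef)
    (Q : Matrix (Fin n) (Fin n) ℝ) (hQ : Q.PosDef)
    (R : ∀ i : Fin N, Matrix (Fin (m i)) (Fin (m i)) ℝ) (hR : ∀ i, (R i).PosDef)
    (L : Matrix (Fin N) (Fin N) ℝ)
    (hLnonneg : ∀ i j, 0 ≤ L i j) (hLrow : ∀ i, ∑ j, L i j = 1)
    (hLprim : ∃ k : ℕ, 0 < k ∧ ∀ i j, 0 < (L ^ k) i j)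
    (S : Fin N → Matrix (Fin n) (Fin n) ℝ)
    (hS : ∀ j, S j = ∑ h, L j h • ((C h)ᵀ * (R h)⁻¹ * C h))
    (P1 P2 : Fin N → Matrix (Fin n) (Fin n) ℝ)
    (hP1pos : ∀ i, (P1 i).PosDef) (hP2pos : ∀ i, (P2 i).PosDef)
    (hsol1 : ∀ i, P1 i =
      A * (∑ j, (L i j • (P1 j)⁻¹ + L i j • ((C j)ᵀ * (R j)⁻¹ * C j)))⁻¹ * Aᵀ + Q)
    (hsol2 : ∀ i, P2 i =
      A * (∑ j, (L i j • (P2 j)⁻¹ + L i j • ((C j)ᵀ * (R j)⁻¹ * C j)))⁻¹ * Aᵀ + Q)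
    (Ptil1 Ptil2 : Fin N → Matrix (Fin n) (Fin n) ℝ)
    (hPtil1 : ∀ i, Ptil1 i = (∑ j, L i j • (P1 j)⁻¹)⁻¹)
    (hPtil2 : ∀ i, Ptil2 i = (∑ j, L i j • (P2 j)⁻¹)⁻¹)
    (Asol1 Asol2 : Fin N → Matrix (Fin n) (Fin n) ℝ)
    (hAsol1 : ∀ j, Asol1 j = A * ((Ptil1 j)⁻¹ + S j)⁻¹ * (Ptil1 j)⁻¹)
    (hAsol2 : ∀ j, Asol2 j = A * ((Ptil2 j)⁻¹ + S j)⁻¹ * (Ptil2 j)⁻¹)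
    (Atil1 Atil2 : Fin N → Fin N → Matrix (Fin n) (Fin n) ℝ)
    (hAtil1 : ∀ i j, Atil1 i j = Real.sqrt (L i j) • (Ptil1 i * (P1 j)⁻¹ * Asol1 j))
    (hAtil2 : ∀ i j, Atil2 i j = Real.sqrt (L i j) • (Ptil2 i * (P2 j)⁻¹ * Asol2 j)) :
    ∀ i : Fin N,
      Ptil1 i - Ptil2 i = ∑ j, Atil1 i j * (Ptil1 j - Ptil2 j) * (Atil2 i j)ᵀ :=
  hcre_two_solutions_difference_identity_general n N m A C Q R hR L hLnonneg hLrow S hS P1 P2 hP1pos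
    hP2pos hsol1 hsol2 Ptil1 Ptil2 hPtil1 hPtil2 Asol1 Asol2 hAsol1 hAsol2 Atil1 Atil2 hAtil1 hAtil2
end

section
/- The group of positive definite solutions to the HCREs is unique: if {P_i^{(1)}}_{i=1}^N and {P_i^{(2)}}_{i=1}^N are both groups of positive definite n×n matrices satisfying P_i = A (∑_{j=1}^N l_{ij} P_j^{-1} + l_{ij} C_jᵀ R_j^{-1} C_j)^{-1} Aᵀ + Q for all i, then P_i^{(1)} = P_i^{(2)} for every i ∈ {1, …, N}. -/
/-!
Call `β ≥ 1` admissible for two solutions `P, P'` if `P j ≤ β • P' j` for all `j`. Pushing this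
through the right-hand side of the HCREs, inversion reverses the Loewner order twice and the
terms `C jᵀ R j⁻¹ C j` only help, so `P i - Q ≤ β • (P' i - Q)`. Since `Q ≥ ε • P' i` for some
`ε ∈ (0, 1]`, this improves `β` to `1 + (1 - ε) (β - 1)`. Iterating, `β` can be taken
arbitrarily close to `1`, hence `P ≤ P'`, and `P = P'` by symmetry.
-/

open Matrix Filter Topology
open scoped MatrixOrder ComplexOrder

namespace Matrix

variable {𝕜 n : Type*} [RCLike 𝕜]

lemma posDef_sum_smul_s6 {ι : Type*} [Fintype ι] {w : ι → ℝ} (hw : ∀ j, 0 ≤ w j)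
    (hpos : ∃ j, 0 < w j) {X : ι → Matrix n n 𝕜} (hX : ∀ j, (X j).PosDef) :
    (∑ j, w j • X j).PosDef := by
  classical
  obtain ⟨j₀, hj₀⟩ := hpos
  rw [← Finset.add_sum_erase _ _ (Finset.mem_univ j₀)]
  exact ((hX j₀).smul hj₀).add_posSemidef
    (posSemidef_sum _ fun j _ => (hX j).posSemidef.smul (hw j))

variable [Fintype n]

lemma isClosed_setOf_posSemidef : IsClosed {M : Matrix n n 𝕜 | M.PosSemidef} := by
  simp only [posSemidef_iff_dotProduct_mulVec, Set.ofPred_and, Set.ofPred_forall]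
  exact (isClosed_eq continuous_id.matrix_conjTranspose continuous_id).inter
    (isClosed_iInter fun x => isClosed_le continuous_const
      (continuous_const.dotProduct (continuous_id.matrix_mulVec continuous_const)))

lemma le_of_le_smul_of_tendsto {ι : Type*} {X Y : Matrix n n 𝕜} {l : Filter ι} [l.NeBot]
    {c : ι → ℝ} (hc : Tendsto c l (𝓝 1)) (h : ∀ᶠ k in l, X ≤ c k • Y) : X ≤ Y := by
  have hlim : Tendsto (fun k => c k • Y - X) l (𝓝 (Y - X)) := by
    simpa using (hc.smul_const Y).sub_const X
  exact isClosed_setOf_posSemidef.mem_of_tendsto hlim h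

variable [DecidableEq n]

lemma PosDef.inv_le_inv {X Y : Matrix n n 𝕜} (hX : X.PosDef) (hXY : X ≤ Y) :
    Y⁻¹ ≤ X⁻¹ := by
  have hY : Y.PosDef := by simpa using hX.add_posSemidef hXY
  have hXu := (isUnit_iff_isUnit_det X).mp hX.isUnit
  have hYu := (isUnit_iff_isUnit_det Y).mp hY.isUnit
  -- `X⁻¹ - Y⁻¹ = Y⁻¹ D Y⁻¹ + Y⁻¹ D X⁻¹ D Y⁻¹` with `D = Y - X ≥ 0`
  have key : X⁻¹ - Y⁻¹ =
      star Y⁻¹ * (Y - X) * Y⁻¹ + star ((Y - X) * Y⁻¹) * X⁻¹ * ((Y - X) * Y⁻¹) := by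
    rw [star_mul, hY.inv.isHermitian.isSelfAdjoint.star_eq,
      (hY.isHermitian.sub hX.isHermitian).isSelfAdjoint.star_eq]
    simp only [sub_mul, mul_sub, ← mul_assoc, nonsing_inv_mul Y hYu, one_mul,
      mul_nonsing_inv_cancel_right X _ hXu, mul_nonsing_inv_cancel_right Y _ hYu,
      nonsing_inv_mul X hXu]
    abel
  rw [← sub_nonneg, key]
  exact add_nonneg (star_left_conjugate_nonneg (sub_nonneg.2 hXY) _)
    (star_left_conjugate_nonneg hX.inv.posSemidef.nonneg _)

lemma PosDef.eventually_le_smul {P Q : Matrix n n 𝕜} (hQ : Q.PosDef) (hP : P.IsHermitian) :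
    ∀ᶠ c : ℝ in atTop, P ≤ c • Q := by
  rcases subsingleton_or_nontrivial (Matrix n n 𝕜) with _ | _
  · exact .of_forall fun _ => (Subsingleton.elim _ _).le
  obtain ⟨r, hr, hrQ⟩ : ∃ r > 0, algebraMap ℝ _ r ≤ Q :=
    (CFC.exists_pos_algebraMap_le_iff hQ.isHermitian.isSelfAdjoint).2
      fun _ hx => hQ.isStrictlyPositive.spectrum_pos hx
  obtain ⟨s, hs⟩ := (isCompact_iff_compactSpace.mpr inferInstance :
    IsCompact (spectrum ℝ P)).bddAbove
  filter_upwards [eventually_ge_atTop (max (s / r) 0)] with c hc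
  calc P ≤ algebraMap ℝ _ s := le_algebraMap_of_spectrum_le hs hP.isSelfAdjoint
    _ ≤ algebraMap ℝ _ (c * r) :=
      algebraMap_mono _ ((div_le_iff₀ hr).1 (le_of_max_le_left hc))
    _ = c • algebraMap ℝ _ r := by rw [map_mul, Algebra.smul_def]
    _ ≤ c • Q := smul_le_smul_of_nonneg_left hrQ (le_of_max_le_right hc)

end Matrix

section HCRE

variable {n ι : Type*} [Fintype n] [DecidableEq n] [Fintype ι]
  {A Q : Matrix n n ℝ} {L : Matrix ι ι ℝ} {S : ι → Matrix n n ℝ}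

/-- The right-hand side of the HCREs; `S j` stands for `C jᵀ R j⁻¹ C j`. -/
noncomputable def hcreMap (A Q : Matrix n n ℝ) (L : Matrix ι ι ℝ) (S P : ι → Matrix n n ℝ)
    (i : ι) : Matrix n n ℝ :=
  A * (∑ j, (L i j • (P j)⁻¹ + L i j • S j))⁻¹ * Aᵀ + Q

lemma hcreMap_sub_le_smul (hL : ∀ i j, 0 ≤ L i j) (hL1 : ∀ i, ∑ j, L i j = 1)
    (hS : ∀ j, (S j).PosSemidef) {P P' : ι → Matrix n n ℝ} (hP : ∀ j, (P j).PosDef)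
    (hP' : ∀ j, (P' j).PosDef) {β : ℝ} (hβ : 1 ≤ β) (h : ∀ j, P j ≤ β • P' j) (i : ι) :
    hcreMap A Q L S P i - Q ≤ β • (hcreMap A Q L S P' i - Q) := by
  have hβ₀ : 0 < β := zero_lt_one.trans_le hβ
  have inv_smul {c : ℝ} (hc : c ≠ 0) {X : Matrix n n ℝ} (hX : X.PosDef) :
      (c • X)⁻¹ = c⁻¹ • X⁻¹ :=
    inv_smul' X (Units.mk0 c hc) ((isUnit_iff_isUnit_det X).mp hX.isUnit)
  have hM' : (∑ j, (L i j • (P' j)⁻¹ + L i j • S j)).PosDef := by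
    obtain ⟨j₀, -, hj₀⟩ :=
      Finset.exists_lt_of_sum_lt (s := .univ) (f := 0) (g := L i) (by simp [hL1 i])
    rw [Finset.sum_add_distrib]
    exact (posDef_sum_smul_s6 (hL i) ⟨j₀, hj₀⟩ fun j => (hP' j).inv).add_posSemidef
      (posSemidef_sum _ fun j _ => (hS j).smul (hL i j))
  set M := ∑ j, (L i j • (P j)⁻¹ + L i j • S j)
  set M' := ∑ j, (L i j • (P' j)⁻¹ + L i j • S j)
  have hMM' : β⁻¹ • M' ≤ M := by
    rw [Finset.smul_sum]
    refine Finset.sum_le_sum fun j _ => ?_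
    rw [smul_add, smul_comm β⁻¹ (L i j), smul_comm β⁻¹ (L i j)]
    refine add_le_add (smul_le_smul_of_nonneg_left ?_ (hL i j))
      (smul_le_smul_of_nonneg_left ?_ (hL i j))
    · rw [← inv_smul hβ₀.ne' (hP' j)]
      exact (hP j).inv_le_inv (h j)
    · exact smul_le_of_le_one_left (hS j).nonneg (inv_le_one_of_one_le₀ hβ)
  have hinv : M⁻¹ ≤ β • M'⁻¹ := by
    have := (hM'.smul (inv_pos.2 hβ₀)).inv_le_inv hMM'
    rwa [inv_smul (inv_ne_zero hβ₀.ne') hM', inv_inv] at this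
  simpa [hcreMap, star_eq_conjTranspose, conjTranspose_eq_transpose_of_trivial] using
    star_right_conjugate_le_conjugate hinv A

lemma hcre_solution_le_smul_of_le_smul (hL : ∀ i j, 0 ≤ L i j) (hL1 : ∀ i, ∑ j, L i j = 1)
    (hS : ∀ j, (S j).PosSemidef) {P P' : ι → Matrix n n ℝ} (hP : ∀ j, (P j).PosDef)
    (hP' : ∀ j, (P' j).PosDef) (hPsol : ∀ i, P i = hcreMap A Q L S P i)
    (hP'sol : ∀ i, P' i = hcreMap A Q L S P' i) {ε : ℝ} (hε : ∀ i, ε • P' i ≤ Q)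
    {β : ℝ} (hβ : 1 ≤ β) (h : ∀ j, P j ≤ β • P' j) (i : ι) :
    P i ≤ (1 + (1 - ε) * (β - 1)) • P' i := by
  have hβQ := smul_le_smul_of_nonneg_left (hε i) (sub_nonneg.2 hβ)
  calc P i = (hcreMap A Q L S P i - Q) + Q := by rw [sub_add_cancel, ← hPsol]
    _ ≤ β • (hcreMap A Q L S P' i - Q) + Q :=
      add_le_add_left (hcreMap_sub_le_smul hL hL1 hS hP hP' hβ h i) Q
    _ = β • P' i - (β - 1) • Q := by rw [← hP'sol]; module
    _ ≤ β • P' i - (β - 1) • ε • P' i := sub_le_sub_left hβQ _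
    _ = (1 + (1 - ε) * (β - 1)) • P' i := by module

lemma hcre_solution_le (hQ : Q.PosDef) (hL : ∀ i j, 0 ≤ L i j) (hL1 : ∀ i, ∑ j, L i j = 1)
    (hS : ∀ j, (S j).PosSemidef) {P P' : ι → Matrix n n ℝ} (hP : ∀ j, (P j).PosDef)
    (hP' : ∀ j, (P' j).PosDef) (hPsol : ∀ i, P i = hcreMap A Q L S P i)
    (hP'sol : ∀ i, P' i = hcreMap A Q L S P' i) (i : ι) :
    P i ≤ P' i := by
  obtain ⟨β, hβ, hPβ⟩ := ((eventually_ge_atTop 1).and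
    (eventually_all.2 fun j => (hP' j).eventually_le_smul (hP j).isHermitian)).exists
  obtain ⟨c, hc, hP'c⟩ := ((eventually_ge_atTop 1).and
    (eventually_all.2 fun j => hQ.eventually_le_smul (hP' j).isHermitian)).exists
  set ε := c⁻¹
  have hε : ∀ j, ε • P' j ≤ Q := fun j => by
    simpa [smul_smul, inv_mul_cancel₀ (zero_lt_one.trans_le hc).ne'] using
      smul_le_smul_of_nonneg_left (hP'c j) (inv_nonneg.2 (zero_le_one.trans hc))
  have hε₀ : 0 < ε := inv_pos.2 (zero_lt_one.trans_le hc)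
  have hε₁ : ε ≤ 1 := inv_le_one_of_one_le₀ hc
  have hiter : ∀ k : ℕ, ∀ j, P j ≤ (1 + (1 - ε) ^ k * (β - 1)) • P' j := by
    intro k
    induction k with
    | zero => simpa using hPβ
    | succ k ih =>
      have hk : 1 ≤ 1 + (1 - ε) ^ k * (β - 1) :=
        le_add_of_nonneg_right (mul_nonneg (pow_nonneg (sub_nonneg.2 hε₁) k) (sub_nonneg.2 hβ))
      convert hcre_solution_le_smul_of_le_smul hL hL1 hS hP hP' hPsol hP'sol hε hk ih using 3
      ring
  have hlim : Tendsto (fun k : ℕ => 1 + (1 - ε) ^ k * (β - 1)) atTop (𝓝 1) := by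
    simpa using ((tendsto_pow_atTop_nhds_zero_of_lt_one (sub_nonneg.2 hε₁)
      (sub_lt_self 1 hε₀)).mul_const (β - 1)).const_add 1
  exact Matrix.le_of_le_smul_of_tendsto hlim (.of_forall fun k => hiter k i)

end HCRE

theorem hcre_solution_unique_general
    (n N : ℕ)
    (m : Fin N → ℕ)
    (A : Matrix (Fin n) (Fin n) ℝ)
    (C : ∀ i : Fin N, Matrix (Fin (m i)) (Fin n) ℝ)
    (Q : Matrix (Fin n) (Fin n) ℝ) (hQ : Q.PosDef)
    (R : ∀ i : Fin N, Matrix (Fin (m i)) (Fin (m i)) ℝ) (hR : ∀ i, (R i).PosDef)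
    (L : Matrix (Fin N) (Fin N) ℝ)
    (hLnonneg : ∀ i j, 0 ≤ L i j) (hLrow : ∀ i, ∑ j, L i j = 1)
    (P1 P2 : Fin N → Matrix (Fin n) (Fin n) ℝ)
    (hP1pos : ∀ i, (P1 i).PosDef) (hP2pos : ∀ i, (P2 i).PosDef)
    (hsol1 : ∀ i, P1 i =
      A * (∑ j, (L i j • (P1 j)⁻¹ + L i j • ((C j)ᵀ * (R j)⁻¹ * C j)))⁻¹ * Aᵀ + Q)
    (hsol2 : ∀ i, P2 i =
      A * (∑ j, (L i j • (P2 j)⁻¹ + L i j • ((C j)ᵀ * (R j)⁻¹ * C j)))⁻¹ * Aᵀ + Q) :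
    ∀ i : Fin N, P1 i = P2 i := by
  have hS : ∀ j, ((C j)ᵀ * (R j)⁻¹ * C j).PosSemidef := fun j => by
    simpa [conjTranspose_eq_transpose_of_trivial] using
      (hR j).inv.posSemidef.conjTranspose_mul_mul_same (C j)
  intro i
  exact le_antisymm (hcre_solution_le hQ hLnonneg hLrow hS hP1pos hP2pos hsol1 hsol2 i)
    (hcre_solution_le hQ hLnonneg hLrow hS hP2pos hP1pos hsol2 hsol1 i)

/-- Uniqueness of the group of positive definite solutions to the
harmonic-coupled Riccati equations. -/
theorem hcre_solution_unique
    (n N : ℕ) (hn : 0 < n) (hN : 0 < N)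
    (m : Fin N → ℕ) (hm : ∀ i, 0 < m i)
    (A : Matrix (Fin n) (Fin n) ℝ) (hA : IsUnit A.det)
    (C : ∀ i : Fin N, Matrix (Fin (m i)) (Fin n) ℝ)
    (hObs : (∑ k ∈ Finset.range n, (A ^ k)ᵀ * (∑ i, (C i)ᵀ * C i) * A ^ k).PosDef)
    (Q : Matrix (Fin n) (Fin n) ℝ) (hQ : Q.PosDef)
    (R : ∀ i : Fin N, Matrix (Fin (m i)) (Fin (m i)) ℝ) (hR : ∀ i, (R i).PosDef)
    (L : Matrix (Fin N) (Fin N) ℝ)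
    (hLnonneg : ∀ i j, 0 ≤ L i j) (hLrow : ∀ i, ∑ j, L i j = 1)
    (hLprim : ∃ k : ℕ, 0 < k ∧ ∀ i j, 0 < (L ^ k) i j)
    (P1 P2 : Fin N → Matrix (Fin n) (Fin n) ℝ)
    (hP1pos : ∀ i, (P1 i).PosDef) (hP2pos : ∀ i, (P2 i).PosDef)
    (hsol1 : ∀ i, P1 i =
      A * (∑ j, (L i j • (P1 j)⁻¹ + L i j • ((C j)ᵀ * (R j)⁻¹ * C j)))⁻¹ * Aᵀ + Q)
    (hsol2 : ∀ i, P2 i =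
      A * (∑ j, (L i j • (P2 j)⁻¹ + L i j • ((C j)ᵀ * (R j)⁻¹ * C j)))⁻¹ * Aᵀ + Q) :
    ∀ i : Fin N, P1 i = P2 i :=
  hcre_solution_unique_general n N m A C Q hQ R hR L hLnonneg hLrow P1 P2 hP1pos hP2pos hsol1 hsol2
end
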